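/- arXiv:2404.08287 — 4 statements merged into one kernel-verified Lean document; each statement's English description precedes it below -/
import Mathlib

section
/- Let p⁻, p₀, p⁺ ≥ 0 with p⁻ + p₀ + p⁺ = 1 and p⁻ = p⁺ > 0, let X₁, X₂, … be i.i.d. with P(Xᵢ = −1) = p⁻, P(Xᵢ = 0) = p₀, P(Xᵢ = +1) = p⁺, and let Y₀ = 0, Yᵢ = max(0, Yᵢ₋₁ + Xᵢ). Then E[Yₙ] = Θ(√n): there exist constants c₁, c₂ > 0 (depending only on p⁻, p₀, p⁺) and n₀ such that c₁·√n ≤ E[Yₙ] ≤ c₂·√n for all n ≥ n₀. -/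
/-!
Write `a n`, `b n`, `c n` for the first three moments of `Yₙ` and `s = E[X²] = 2p`. For an
integer `z ≥ -1` one has `max(0, z)² + max(0, z) = z² + z` and `max(0, z)³ ≤ z³ + 1`. As `Xₙ₊₁`
is independent of `Yₙ`, with `E[X] = E[X³] = 0`, this gives `a n + b n = s n` and
`c (n + 1) ≤ c n + 3 s a n + 1`. Cauchy–Schwarz gives `a² ≤ b`, hence `a n ≤ √(s n)` and
`c n = O(n^{3/2})`. Cauchy–Schwarz for the weight `Yₙ` gives `b² ≤ a c`; since `b n ≥ s n / 2`
for large `n`, this yields `a n ≥ b n² / c n = Ω(√n)`.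
-/

open MeasureTheory ProbabilityTheory Finset

theorem le_mul_mul_sqrt_of_succ_le {s : ℝ} (hs : 0 < s) {a c : ℕ → ℝ}
    (ha : ∀ n, a n ≤ √s * √n) (hc0 : c 0 = 0) (hc : ∀ n, c (n + 1) ≤ c n + 3 * s * a n + 1)
    (n : ℕ) : c n ≤ (3 * s * √s + 1) * n * √n := by
  set M := 3 * s * √s + 1 with hM_def
  induction n with
  | zero => simp [hc0]
  | succ n ih =>
    have hmono : √n ≤ √((n : ℝ) + 1) := Real.sqrt_le_sqrt (by simp)
    have hone : 1 ≤ √((n : ℝ) + 1) := Real.one_le_sqrt.mpr (by simp)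
    have hM' : M * √((n : ℝ) + 1) = 3 * s * √s * √((n : ℝ) + 1) + √((n : ℝ) + 1) := by
      rw [hM_def]; ring
    calc c (n + 1) ≤ M * n * √n + 3 * s * √s * √n + 1 := by
          nlinarith [hc n, ha n]
      _ ≤ M * (n + 1 : ℕ) * √(n + 1 : ℕ) := by
          push_cast
          nlinarith [mul_le_mul_of_nonneg_left hmono (by positivity : 0 ≤ M * n),
            mul_le_mul_of_nonneg_left hmono (by positivity : 0 ≤ 3 * s * √s)]

theorem exists_sqrt_bounds_of_moment_relations {s : ℝ} (hs : 0 < s) {a b c : ℕ → ℝ}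
    (ha : ∀ n, 0 ≤ a n) (hab : ∀ n, a n + b n = s * n) (ha2 : ∀ n, a n ^ 2 ≤ b n)
    (hbc : ∀ n, b n ^ 2 ≤ a n * c n) (hc0 : c 0 = 0)
    (hc : ∀ n, c (n + 1) ≤ c n + 3 * s * a n + 1) :
    ∃ c₁ c₂ : ℝ, 0 < c₁ ∧ 0 < c₂ ∧ ∃ n₀ : ℕ, ∀ n : ℕ, n₀ ≤ n →
      c₁ * √n ≤ a n ∧ a n ≤ c₂ * √n := by
  have hupper (n : ℕ) : a n ≤ √s * √n := by
    rw [← Real.sqrt_mul hs.le]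
    exact (le_abs_self _).trans (Real.abs_le_sqrt (by nlinarith [ha n, ha2 n, hab n]))
  set M := 3 * s * √s + 1
  have hcube := le_mul_mul_sqrt_of_succ_le hs hupper hc0 hc
  refine ⟨s ^ 2 / (4 * M), √s, by positivity, Real.sqrt_pos.mpr hs, ⌈4 / s⌉₊ + 1,
    fun n hn => ⟨?_, hupper n⟩⟩
  have hsn : 4 ≤ s * n := by
    have : 4 / s ≤ n := (Nat.le_ceil _).trans (by exact_mod_cast (Nat.le_succ _).trans hn)
    rwa [div_le_iff₀ hs, mul_comm] at this
  set q := √(n : ℝ)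
  have hq2 : q ^ 2 = n := Real.sq_sqrt n.cast_nonneg
  have hq : 0 < q := Real.sqrt_pos.mpr (by exact_mod_cast (Nat.succ_pos _).trans_le hn)
  have hb : s * n / 2 ≤ b n := by
    have hu : (√s * q) ^ 2 = s * n := by rw [mul_pow, Real.sq_sqrt hs.le, hq2]
    nlinarith [hupper n, hab n, Real.sqrt_nonneg s]
  have hkey : (s * n / 2) ^ 2 ≤ a n * (M * n * q) :=
    (pow_le_pow_left₀ (by positivity) hb 2).trans
      ((hbc n).trans (mul_le_mul_of_nonneg_left (hcube n) (ha n)))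
  rw [← hq2] at hkey
  rw [div_mul_eq_mul_div, div_le_iff₀ (by positivity)]
  have : (s ^ 2 * q) * q ^ 3 ≤ (a n * (4 * M)) * q ^ 3 := by nlinarith
  exact le_of_mul_le_mul_right this (by positivity)

lemma max_zero_sq_add_self {z : ℤ} (hz : -1 ≤ z) : max 0 z ^ 2 + max 0 z = z ^ 2 + z := by
  rcases le_or_gt 0 z with h | h
  · rw [max_eq_right h]
  · obtain rfl : z = -1 := by omega
    norm_num

lemma max_zero_cube_le {z : ℤ} (hz : -1 ≤ z) : max 0 z ^ 3 ≤ z ^ 3 + 1 := by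
  rcases le_or_gt 0 z with h | h
  · rw [max_eq_right h]; linarith
  · obtain rfl : z = -1 := by omega
    norm_num

lemma abs_max_zero_le (z : ℤ) : |max 0 z| ≤ |z| := by
  rw [abs_of_nonneg (le_max_left 0 z)]
  exact max_le (abs_nonneg z) (le_abs_self z)

section Walk

variable {Ω : Type*} {X : ℕ → Ω → ℤ}

def reflectedWalk (X : ℕ → Ω → ℤ) : ℕ → Ω → ℤ
  | 0 => fun _ => 0
  | n + 1 => fun ω => max 0 (reflectedWalk X n ω + X (n + 1) ω)

theorem reflectedWalk_nonneg (n : ℕ) (ω : Ω) : 0 ≤ reflectedWalk X n ω := by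
  cases n with
  | zero => exact le_rfl
  | succ n => exact le_max_left _ _

theorem reflectedWalk_le {ω : Ω} (hX : ∀ i, X i ω ≤ 1) (n : ℕ) : reflectedWalk X n ω ≤ n := by
  induction n with
  | zero => exact le_rfl
  | succ n ih =>
    refine max_le (Int.natCast_nonneg _) ?_
    push_cast
    linarith [hX (n + 1)]

theorem measurable_reflectedWalk {m : MeasurableSpace Ω} {n : ℕ}
    (hX : ∀ i ≤ n, Measurable[m] (X i)) : Measurable[m] (reflectedWalk X n) := by
  induction n with
  | zero => exact measurable_const
  | succ n ih =>
    exact measurable_const.max ((ih fun i hi => hX i (hi.trans n.le_succ)).add (hX _ le_rfl))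

end Walk

section Probability

variable {Ω : Type*} [MeasurableSpace Ω] {μ : Measure Ω}

theorem sq_integral_mul_le_integral_mul_integral_mul_sq {w g : Ω → ℝ} (hw : 0 ≤ᵐ[μ] w)
    (hw_int : Integrable w μ) (hwg : Integrable (fun ω => w ω * g ω) μ)
    (hwg2 : Integrable (fun ω => w ω * g ω ^ 2) μ) :
    (∫ ω, w ω * g ω ∂μ) ^ 2 ≤ (∫ ω, w ω ∂μ) * ∫ ω, w ω * g ω ^ 2 ∂μ := by
  have hquad : ∀ t : ℝ, 0 ≤ (∫ ω, w ω ∂μ) * (t * t) + (-2 * ∫ ω, w ω * g ω ∂μ) * t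
      + ∫ ω, w ω * g ω ^ 2 ∂μ := by
    intro t
    have hexpand : ∫ ω, w ω * (g ω - t) ^ 2 ∂μ
        = ∫ ω, w ω * g ω ^ 2 ∂μ - 2 * t * ∫ ω, w ω * g ω ∂μ + t * t * ∫ ω, w ω ∂μ := by
      have hpoly : (fun ω => w ω * (g ω - t) ^ 2)
          = fun ω => w ω * g ω ^ 2 - 2 * t * (w ω * g ω) + t * t * w ω := by
        ext ω; ring
      have hsub : Integrable (fun ω => w ω * g ω ^ 2 - 2 * t * (w ω * g ω)) μ :=
        hwg2.sub (hwg.const_mul _)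
      rw [hpoly, integral_add hsub (hw_int.const_mul _), integral_sub hwg2 (hwg.const_mul _),
        integral_const_mul, integral_const_mul]
    have hnonneg : 0 ≤ ∫ ω, w ω * (g ω - t) ^ 2 ∂μ :=
      integral_nonneg_of_ae (by filter_upwards [hw] with ω hω; exact mul_nonneg hω (sq_nonneg _))
    linarith
  have := discrim_le_zero hquad
  rw [discrim] at this
  nlinarith

theorem integrable_intCast_pow [IsFiniteMeasure μ] {f : Ω → ℤ} (hf : Measurable f) {N : ℤ}
    (hN : ∀ᵐ ω ∂μ, |f ω| ≤ N) (k : ℕ) : Integrable (fun ω => (f ω : ℝ) ^ k) μ := by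
  refine Integrable.of_bound ((measurable_from_top.comp hf).pow_const k).aestronglyMeasurable
    ((N : ℝ) ^ k) ?_
  filter_upwards [hN] with ω hω
  rw [Real.norm_eq_abs, abs_pow]
  exact pow_le_pow_left₀ (abs_nonneg _) (by exact_mod_cast hω) k

theorem integral_add_pow_of_indepFun {Y X : Ω → ℝ} (hYX : IndepFun Y X μ) (k : ℕ)
    (hY : ∀ j ≤ k, Integrable (fun ω => Y ω ^ j) μ)
    (hX : ∀ j ≤ k, Integrable (fun ω => X ω ^ j) μ) :
    ∫ ω, (Y ω + X ω) ^ k ∂μ =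
      ∑ j ∈ range (k + 1), (∫ ω, Y ω ^ j ∂μ) * (∫ ω, X ω ^ (k - j) ∂μ) * k.choose j := by
  have hterm (j : ℕ) : IndepFun (fun ω => Y ω ^ j) (fun ω => X ω ^ (k - j)) μ :=
    hYX.comp (measurable_id.pow_const j) (measurable_id.pow_const (k - j))
  have hle {j : ℕ} (hj : j ∈ range (k + 1)) : j ≤ k := Nat.lt_succ_iff.mp (mem_range.mp hj)
  simp_rw [add_pow]
  have hint (j : ℕ) (hj : j ∈ range (k + 1)) :
      Integrable (fun ω => Y ω ^ j * X ω ^ (k - j) * k.choose j) μ :=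
    ((hterm j).integrable_mul (hY j (hle hj)) (hX _ (k.sub_le j))).mul_const _
  rw [integral_finsetSum _ hint]
  refine sum_congr rfl fun j hj => ?_
  rw [integral_mul_const, (hterm j).integral_fun_mul_eq_mul_integral
    (hY j (hle hj)).aestronglyMeasurable (hX _ (k.sub_le j)).aestronglyMeasurable]

theorem integral_comp_eq_sum_of_ae_mem [IsFiniteMeasure μ] {α : Type*} [MeasurableSpace α]
    [MeasurableSingletonClass α] {X : Ω → α} (hX : Measurable X) {s : Finset α}
    (hs : ∀ᵐ ω ∂μ, X ω ∈ s) (g : α → ℝ) :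
    ∫ ω, g (X ω) ∂μ = ∑ z ∈ s, μ.real {ω | X ω = z} * g z := by
  have hmeas (z : α) : MeasurableSet {ω | X ω = z} := hX (measurableSet_singleton z)
  have hfib : (fun ω => g (X ω)) =ᵐ[μ]
      fun ω => ∑ z ∈ s, {ω | X ω = z}.indicator (fun _ => g z) ω := by
    filter_upwards [hs] with ω hω
    classical
    simp only [Set.indicator_apply, Set.mem_ofPred_eq]
    rw [sum_ite_eq, if_pos hω]
  rw [integral_congr_ae hfib, integral_finsetSum _ fun z _ =>
    (integrable_const (g z)).indicator (hmeas z)]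
  exact sum_congr rfl fun z _ => by rw [integral_indicator_const _ (hmeas z), smul_eq_mul]

theorem ae_mem_of_sum_measureReal_eq_one [IsProbabilityMeasure μ] {α : Type*} [MeasurableSpace α]
    [MeasurableSingletonClass α] {X : Ω → α} (hX : Measurable X) {s : Finset α}
    (hs : ∑ z ∈ s, μ.real {ω | X ω = z} = 1) : ∀ᵐ ω ∂μ, X ω ∈ s := by
  have hpre : μ.real (X ⁻¹' s) = 1 := by
    rw [← sum_measureReal_preimage_singleton s fun z _ => hX (measurableSet_singleton z)]
    exact hs
  refine (ae_mem_iff_measure_eq (hX s.measurableSet).nullMeasurableSet).mpr ?_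
  rw [measure_univ]
  exact (ENNReal.toReal_eq_one_iff _).mp hpre

theorem indepFun_reflectedWalk {X : ℕ → Ω → ℤ} (hX : ∀ i, Measurable (X i))
    (hind : iIndepFun X μ) (n : ℕ) :
    IndepFun (reflectedWalk X n) (X (n + 1)) μ := by
  have hsplit := indep_iSup_of_disjoint (fun i => (hX i).comap_le) hind.iIndep
    (S := Set.Iic n) (T := {n + 1}) (by simp)
  rw [IndepFun_iff_Indep]
  refine indep_of_indep_of_le_left (indep_of_indep_of_le_right hsplit ?_) ?_
  · exact le_iSup₂_of_le (n + 1) rfl le_rfl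
  · refine Measurable.comap_le (measurable_reflectedWalk fun i hi => ?_)
    exact (comap_measurable (X i)).mono (le_iSup₂_of_le i hi le_rfl) le_rfl

theorem ae_abs_reflectedWalk_le {X : ℕ → Ω → ℤ} (hX1 : ∀ i, ∀ᵐ ω ∂μ, |X i ω| ≤ 1) (n : ℕ) :
    ∀ᵐ ω ∂μ, |reflectedWalk X n ω| ≤ n := by
  filter_upwards [ae_all_iff.mpr hX1] with ω hω
  rw [abs_of_nonneg (reflectedWalk_nonneg n ω)]
  exact reflectedWalk_le (fun i => (abs_le.mp (hω i)).2) n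

section Step

variable [IsProbabilityMeasure μ] {Y Z : Ω → ℤ} {N : ℤ}

theorem integral_intCast_add_pow (hY : Measurable Y) (hZ : Measurable Z) (hYZ : IndepFun Y Z μ)
    (hYN : ∀ᵐ ω ∂μ, |Y ω| ≤ N) (hZ1 : ∀ᵐ ω ∂μ, |Z ω| ≤ 1) (k : ℕ) :
    ∫ ω, ((Y ω + Z ω : ℤ) : ℝ) ^ k ∂μ =
      ∑ j ∈ range (k + 1),
        (∫ ω, (Y ω : ℝ) ^ j ∂μ) * (∫ ω, (Z ω : ℝ) ^ (k - j) ∂μ) * k.choose j := by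
  push_cast
  exact integral_add_pow_of_indepFun (hYZ.comp measurable_from_top measurable_from_top) k
    (fun j _ => integrable_intCast_pow hY hYN j) (fun j _ => integrable_intCast_pow hZ hZ1 j)

theorem integral_max_zero_add_sq_add (hY : Measurable Y) (hZ : Measurable Z) (hYZ : IndepFun Y Z μ)
    (hY0 : ∀ ω, 0 ≤ Y ω) (hYN : ∀ᵐ ω ∂μ, |Y ω| ≤ N) (hZ1 : ∀ᵐ ω ∂μ, |Z ω| ≤ 1)
    (hZmean : ∫ ω, (Z ω : ℝ) ∂μ = 0) :
    ∫ ω, ((max 0 (Y ω + Z ω) : ℤ) : ℝ) ^ 2 ∂μ + ∫ ω, ((max 0 (Y ω + Z ω) : ℤ) : ℝ) ∂μ =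
      ∫ ω, (Y ω : ℝ) ^ 2 ∂μ + ∫ ω, (Y ω : ℝ) ∂μ + ∫ ω, (Z ω : ℝ) ^ 2 ∂μ := by
  have hS : ∀ᵐ ω ∂μ, |Y ω + Z ω| ≤ N + 1 := by
    filter_upwards [hYN, hZ1] with ω h1 h2 using (abs_add_le _ _).trans (add_le_add h1 h2)
  have hR : ∀ᵐ ω ∂μ, |max 0 (Y ω + Z ω)| ≤ N + 1 := by
    filter_upwards [hS] with ω h using (abs_max_zero_le _).trans h
  have hSm : Measurable fun ω => Y ω + Z ω := hY.add hZ
  have hSk := integrable_intCast_pow hSm hS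
  have hRk := integrable_intCast_pow (measurable_const.max hSm) hR
  have hmoment := integral_intCast_add_pow hY hZ hYZ hYN hZ1
  calc _ = ∫ ω, (((Y ω + Z ω : ℤ) : ℝ) ^ 2 + ((Y ω + Z ω : ℤ) : ℝ)) ∂μ := by
        rw [← integral_add (hRk 2) (by simpa using hRk 1)]
        refine integral_congr_ae ?_
        filter_upwards [hZ1] with ω hω
        exact_mod_cast max_zero_sq_add_self (by linarith [hY0 ω, (abs_le.mp hω).1])
    _ = _ := by
        have hmean := hmoment 1
        simp only [pow_one] at hmean
        rw [integral_add (hSk 2) (by simpa using hSk 1), hmoment 2, hmean]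
        simp [sum_range_succ, hZmean]
        ring

theorem integral_max_zero_add_cube_le (hY : Measurable Y) (hZ : Measurable Z)
    (hYZ : IndepFun Y Z μ) (hY0 : ∀ ω, 0 ≤ Y ω) (hYN : ∀ᵐ ω ∂μ, |Y ω| ≤ N)
    (hZ1 : ∀ᵐ ω ∂μ, |Z ω| ≤ 1) (hZmean : ∫ ω, (Z ω : ℝ) ∂μ = 0)
    (hZcube : ∫ ω, (Z ω : ℝ) ^ 3 ∂μ = 0) :
    ∫ ω, ((max 0 (Y ω + Z ω) : ℤ) : ℝ) ^ 3 ∂μ ≤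
      ∫ ω, (Y ω : ℝ) ^ 3 ∂μ + 3 * (∫ ω, (Z ω : ℝ) ^ 2 ∂μ) * (∫ ω, (Y ω : ℝ) ∂μ) + 1 := by
  have hS : ∀ᵐ ω ∂μ, |Y ω + Z ω| ≤ N + 1 := by
    filter_upwards [hYN, hZ1] with ω h1 h2 using (abs_add_le _ _).trans (add_le_add h1 h2)
  have hR : ∀ᵐ ω ∂μ, |max 0 (Y ω + Z ω)| ≤ N + 1 := by
    filter_upwards [hS] with ω h using (abs_max_zero_le _).trans h
  have hSm : Measurable fun ω => Y ω + Z ω := hY.add hZ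
  have hS3 := integrable_intCast_pow hSm hS 3
  calc _ ≤ ∫ ω, (((Y ω + Z ω : ℤ) : ℝ) ^ 3 + 1) ∂μ := by
        refine integral_mono_ae (integrable_intCast_pow (measurable_const.max hSm) hR 3)
          (hS3.add (integrable_const 1)) ?_
        filter_upwards [hZ1] with ω hω
        exact_mod_cast max_zero_cube_le (by linarith [hY0 ω, (abs_le.mp hω).1])
    _ = _ := by
        rw [integral_add hS3 (integrable_const 1), integral_intCast_add_pow hY hZ hYZ hYN hZ1 3]
        simp [sum_range_succ, hZmean, hZcube]
        ring

end Step

section Walk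

variable [IsProbabilityMeasure μ] {X : ℕ → Ω → ℤ}

theorem exists_sqrt_bounds_integral_reflectedWalk (hX : ∀ i, Measurable (X i))
    (hind : iIndepFun X μ) (hX1 : ∀ i, ∀ᵐ ω ∂μ, |X i ω| ≤ 1) {s : ℝ} (hs : 0 < s)
    (hmean : ∀ i, ∫ ω, (X i ω : ℝ) ∂μ = 0) (hvar : ∀ i, ∫ ω, (X i ω : ℝ) ^ 2 ∂μ = s)
    (hcube : ∀ i, ∫ ω, (X i ω : ℝ) ^ 3 ∂μ = 0) :
    ∃ c₁ c₂ : ℝ, 0 < c₁ ∧ 0 < c₂ ∧ ∃ n₀ : ℕ, ∀ n : ℕ, n₀ ≤ n →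
      c₁ * √n ≤ ∫ ω, (reflectedWalk X n ω : ℝ) ∂μ ∧
        ∫ ω, (reflectedWalk X n ω : ℝ) ∂μ ≤ c₂ * √n := by
  have hW (n : ℕ) : Measurable (reflectedWalk X n) := measurable_reflectedWalk fun i _ => hX i
  have hWN := ae_abs_reflectedWalk_le hX1
  have hWk (n k : ℕ) := integrable_intCast_pow (hW n) (hWN n) k
  have hWnn (n : ℕ) : 0 ≤ᵐ[μ] fun ω => (reflectedWalk X n ω : ℝ) :=
    ae_of_all _ fun ω => Int.cast_nonneg (reflectedWalk_nonneg n ω)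
  have hstep (n : ℕ) := indepFun_reflectedWalk hX hind n
  refine exists_sqrt_bounds_of_moment_relations hs
    (b := fun n => ∫ ω, (reflectedWalk X n ω : ℝ) ^ 2 ∂μ)
    (c := fun n => ∫ ω, (reflectedWalk X n ω : ℝ) ^ 3 ∂μ)
    (fun n => integral_nonneg_of_ae (hWnn n)) (fun n => ?_) (fun n => ?_) (fun n => ?_)
    (by simp [reflectedWalk]) (fun n => ?_)
  · induction n with
    | zero => simp [reflectedWalk]
    | succ n ih =>
      have hrec : ∫ ω, (reflectedWalk X (n + 1) ω : ℝ) ^ 2 ∂μ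
          + ∫ ω, (reflectedWalk X (n + 1) ω : ℝ) ∂μ
          = ∫ ω, (reflectedWalk X n ω : ℝ) ^ 2 ∂μ + ∫ ω, (reflectedWalk X n ω : ℝ) ∂μ + s := by
        rw [← hvar (n + 1)]
        exact integral_max_zero_add_sq_add (hW n) (hX (n + 1)) (hstep n) (reflectedWalk_nonneg n)
          (hWN n) (hX1 _) (hmean _)
      push_cast
      linarith
  · have hcs := sq_integral_mul_le_integral_mul_integral_mul_sq (ae_of_all μ fun _ => zero_le_one)
      (integrable_const 1) (by simpa using hWk n 1) (by simpa using hWk n 2)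
      (g := fun ω => (reflectedWalk X n ω : ℝ))
    simpa using hcs
  · have hsq : (fun ω => (reflectedWalk X n ω : ℝ) * reflectedWalk X n ω)
        = fun ω => (reflectedWalk X n ω : ℝ) ^ 2 := by ext; ring
    have hcb : (fun ω => (reflectedWalk X n ω : ℝ) * reflectedWalk X n ω ^ 2)
        = fun ω => (reflectedWalk X n ω : ℝ) ^ 3 := by ext; ring
    have hcs := sq_integral_mul_le_integral_mul_integral_mul_sq (hWnn n) (by simpa using hWk n 1)
      (hsq ▸ hWk n 2) (hcb ▸ hWk n 3)
    rwa [hsq, hcb] at hcs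
  · rw [← hvar (n + 1)]
    exact integral_max_zero_add_cube_le (hW n) (hX (n + 1)) (hstep n)
      (reflectedWalk_nonneg n) (hWN n) (hX1 _) (hmean _) (hcube _)

end Walk

end Probability

theorem stmt2_general
    {Ω : Type*} [MeasureSpace Ω] [IsProbabilityMeasure (ℙ : Measure Ω)]
    (pm p0 pp : ℝ)
    (hsum : pm + p0 + pp = 1) (heq : pm = pp) (hpos : 0 < pp)
    (X : ℕ → Ω → ℤ) (hmeas : ∀ i, Measurable (X i))
    (hindep : iIndepFun X ℙ)
    (hXm : ∀ i, (ℙ {ω | X i ω = -1}).toReal = pm)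
    (hX0 : ∀ i, (ℙ {ω | X i ω = 0}).toReal = p0)
    (hXp : ∀ i, (ℙ {ω | X i ω = 1}).toReal = pp)
    (Y : ℕ → Ω → ℤ)
    (hY0 : ∀ ω, Y 0 ω = 0)
    (hYs : ∀ i ω, Y (i + 1) ω = max 0 (Y i ω + X (i + 1) ω)) :
    ∃ c₁ c₂ : ℝ, 0 < c₁ ∧ 0 < c₂ ∧ ∃ n₀ : ℕ, ∀ n : ℕ, n₀ ≤ n →
      c₁ * Real.sqrt n ≤ (∫ ω, ((Y n ω : ℝ)) ∂ℙ) ∧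
      (∫ ω, ((Y n ω : ℝ)) ∂ℙ) ≤ c₂ * Real.sqrt n := by
  obtain rfl : Y = reflectedWalk X := by
    funext n ω
    induction n with
    | zero => exact hY0 ω
    | succ n ih => rw [hYs, ih]; rfl
  have hsupp (i : ℕ) : ∀ᵐ ω ∂ℙ, X i ω ∈ ({-1, 0, 1} : Finset ℤ) :=
    ae_mem_of_sum_measureReal_eq_one (hmeas i)
      (by simp [measureReal_def, hXm, hX0, hXp]; linarith)
  have hmoment (i k : ℕ) : ∫ ω, (X i ω : ℝ) ^ k ∂ℙ = pm * (-1) ^ k + p0 * 0 ^ k + pp := by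
    rw [integral_comp_eq_sum_of_ae_mem (hmeas i) (hsupp i) fun z : ℤ => (z : ℝ) ^ k]
    simp [measureReal_def, hXm, hX0, hXp, add_assoc]
  refine exists_sqrt_bounds_integral_reflectedWalk hmeas hindep (fun i => ?_)
    (by positivity : 0 < 2 * pp) (fun i => ?_) (fun i => ?_) (fun i => ?_)
  · filter_upwards [hsupp i] with ω h
    simp only [Finset.mem_insert, Finset.mem_singleton] at h
    rcases h with h | h | h <;> simp [h]
  · simpa [heq] using hmoment i 1
  · rw [hmoment, heq]; ring
  · rw [hmoment, heq]; ring

/-- Reflected random walk with i.i.d. increments in {-1, 0, +1} and p⁻ = p⁺ > 0: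
E[Yₙ] = Θ(√n). -/
theorem stmt2
    {Ω : Type*} [MeasureSpace Ω] [IsProbabilityMeasure (ℙ : Measure Ω)]
    (pm p0 pp : ℝ) (hpm : 0 ≤ pm) (hp0 : 0 ≤ p0) (hpp : 0 ≤ pp)
    (hsum : pm + p0 + pp = 1) (heq : pm = pp) (hpos : 0 < pp)
    (X : ℕ → Ω → ℤ) (hmeas : ∀ i, Measurable (X i))
    (hindep : iIndepFun X ℙ)
    (hident : ∀ i j, IdentDistrib (X i) (X j) ℙ ℙ)
    (hXm : ∀ i, (ℙ {ω | X i ω = -1}).toReal = pm)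
    (hX0 : ∀ i, (ℙ {ω | X i ω = 0}).toReal = p0)
    (hXp : ∀ i, (ℙ {ω | X i ω = 1}).toReal = pp)
    (Y : ℕ → Ω → ℤ)
    (hY0 : ∀ ω, Y 0 ω = 0)
    (hYs : ∀ i ω, Y (i + 1) ω = max 0 (Y i ω + X (i + 1) ω)) :
    ∃ c₁ c₂ : ℝ, 0 < c₁ ∧ 0 < c₂ ∧ ∃ n₀ : ℕ, ∀ n : ℕ, n₀ ≤ n →
      c₁ * Real.sqrt n ≤ (∫ ω, ((Y n ω : ℝ)) ∂ℙ) ∧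
      (∫ ω, ((Y n ω : ℝ)) ∂ℙ) ≤ c₂ * Real.sqrt n :=
  stmt2_general pm p0 pp hsum heq hpos X hmeas hindep hXm hX0 hXp Y hY0 hYs
end

section
/- Let ε be a real number with 0 ≤ ε ≤ 1, set c = 1 − ε/2, and let p⁻ be a real number with 0 ≤ p⁻ ≤ (2+ε)/3. Then p⁻·(2 − 3c + c³) + (−1 − ε) + (2 + ε)·c ≤ c². Equivalently, writing p⁺⁺ = 2p⁻ − 1 − ε and p⁺ = 2 + ε − 3p⁻ (so that p⁻ + p⁺ + p⁺⁺ = 1 and p⁺ + 2p⁺⁺ = p⁻ − ε), one has p⁺⁺ + p⁺·c + p⁻·c³ ≤ c². -/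
/-- Induction-step inequality: for 0 ≤ ε ≤ 1, c = 1 − ε/2 and 0 ≤ p⁻ ≤ (2+ε)/3,
p⁻·(2 − 3c + c³) + (−1 − ε) + (2 + ε)·c ≤ c²; equivalently with
p⁺⁺ = 2p⁻ − 1 − ε and p⁺ = 2 + ε − 3p⁻, p⁺⁺ + p⁺·c + p⁻·c³ ≤ c². -/
theorem stmt15 (ε c pm pp ppp : ℝ) (hε0 : 0 ≤ ε) (hε1 : ε ≤ 1)
    (hc : c = 1 - ε / 2) (hpm0 : 0 ≤ pm) (hpm : pm ≤ (2 + ε) / 3)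
    (hppp : ppp = 2 * pm - 1 - ε) (hpp : pp = 2 + ε - 3 * pm) :
    pm * (2 - 3 * c + c ^ 3) + (-1 - ε) + (2 + ε) * c ≤ c ^ 2 ∧
    pm + pp + ppp = 1 ∧ pp + 2 * ppp = pm - ε ∧
    ppp + pp * c + pm * c ^ 3 ≤ c ^ 2 := by
  subst hc hppp hpp
  refine ⟨?_, by ring, by ring, ?_⟩ <;>
    nlinarith [sq_nonneg ε, sq_nonneg (1 - ε), mul_nonneg hpm0 hε0,
      mul_nonneg (mul_nonneg hpm0 hε0) hε0, sq_nonneg (ε * (1 - ε)),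
      mul_nonneg (mul_nonneg hpm0 hε0) (sq_nonneg ε)]
end

section
/- Let p⁻, p⁺, p⁺⁺ ≥ 0 with p⁻ + p⁺ + p⁺⁺ = 1, let ε = p⁻ − p⁺ − 2p⁺⁺ and assume 0 < ε ≤ 1, set c = 1 − ε/2, and fix a natural number d₀. Let π : ℕ × ℤ → ℝ be any family of nonnegative reals such that: π(n, i) ≤ 1 for all n and all i ≤ d₀; π(0, i) = 0 for all i > d₀; and π(n, i) = p⁺⁺·π(n−1, i−2) + p⁺·π(n−1, i−1) + p⁻·π(n−1, i+1) for all n ≥ 1 and all i > d₀. Then π(n, i) ≤ c^{i−d₀} for all n ≥ 0 and all integers i. -/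
/-- Recursive tail-probability bound for a process with increments −1, +1, +2:
under negative drift ε = p⁻ − p⁺ − 2p⁺⁺ ∈ (0,1], with c = 1 − ε/2, any family π
satisfying the stated boundary conditions and recursion obeys π(n, i) ≤ c^{i−d₀}. -/
theorem stmt16 (pm pp ppp : ℝ) (hpm : 0 ≤ pm) (hpp : 0 ≤ pp) (hppp : 0 ≤ ppp)
    (hsum : pm + pp + ppp = 1)
    (ε : ℝ) (hε : ε = pm - pp - 2 * ppp) (hε0 : 0 < ε) (hε1 : ε ≤ 1)
    (c : ℝ) (hc : c = 1 - ε / 2)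
    (d₀ : ℕ) (π : ℕ × ℤ → ℝ)
    (hnonneg : ∀ n : ℕ, ∀ i : ℤ, 0 ≤ π (n, i))
    (hle1 : ∀ n : ℕ, ∀ i : ℤ, i ≤ (d₀ : ℤ) → π (n, i) ≤ 1)
    (hinit : ∀ i : ℤ, (d₀ : ℤ) < i → π (0, i) = 0)
    (hrec : ∀ n : ℕ, ∀ i : ℤ, (d₀ : ℤ) < i →
      π (n + 1, i) = ppp * π (n, i - 2) + pp * π (n, i - 1) + pm * π (n, i + 1)) :
    ∀ n : ℕ, ∀ i : ℤ, π (n, i) ≤ c ^ (i - (d₀ : ℤ)) := by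
  have hc0 : 0 < c := by rw [hc]; linarith
  have hc0' : c ≠ 0 := ne_of_gt hc0
  have hc1 : c ≤ 1 := by rw [hc]; linarith
  have hpm1 : pm ≤ 1 := by linarith
  -- key inequality: ppp + pp*c + pm*c^3 ≤ c^2
  have key : ppp + pp * c + pm * c ^ 3 ≤ c ^ 2 := by
    have hid : ppp + pp * c + pm * c ^ 3 - c ^ 2
        = -(3 * (1 - pm)) * (ε / 2) ^ 2 - pm * (ε / 2) ^ 3 := by
      have hpp2 : pp = 1 - pm - ppp := by linarith
      subst hc hε hpp2; ring
    nlinarith [mul_nonneg (sub_nonneg.mpr hpm1) (sq_nonneg (ε/2)),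
      mul_nonneg (mul_nonneg hpm (sq_nonneg (ε/2))) hε0.le]
  -- negative (or zero) exponents give value ≥ 1
  have hbig : ∀ m : ℤ, m ≤ 0 → 1 ≤ c ^ m := by
    intro m hm
    have h1 : 1 ≤ c⁻¹ := (one_le_inv₀ hc0).mpr hc1
    have := one_le_zpow₀ h1 (by linarith : (0:ℤ) ≤ -m)
    rwa [zpow_neg, inv_zpow, inv_inv] at this
  intro n
  induction n with
  | zero =>
    intro i
    rcases le_or_gt i (d₀ : ℤ) with h | h
    · exact le_trans (hle1 0 i h) (hbig _ (by linarith))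
    · rw [hinit i h]; positivity
  | succ n ih =>
    intro i
    rcases le_or_gt i (d₀ : ℤ) with h | h
    · exact le_trans (hle1 _ i h) (hbig _ (by linarith))
    · rw [hrec n i h]
      set A := c ^ (i - 2 - (d₀ : ℤ)) with hA
      have hA0 : 0 ≤ A := le_of_lt (zpow_pos hc0 _)
      have e1 : c ^ (i - 1 - (d₀ : ℤ)) = A * c := by
        rw [hA, show i - 1 - (d₀ : ℤ) = (i - 2 - d₀) + 1 by ring, zpow_add_one₀ hc0']
      have e2 : c ^ (i - (d₀ : ℤ)) = A * c ^ 2 := by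
        rw [hA, show i - (d₀ : ℤ) = (i - 2 - d₀) + 2 by ring, zpow_add₀ hc0']
        norm_num
      have e3 : c ^ (i + 1 - (d₀ : ℤ)) = A * c ^ 3 := by
        rw [hA, show i + 1 - (d₀ : ℤ) = (i - 2 - d₀) + 3 by ring, zpow_add₀ hc0']
        norm_num
      have h2 := ih (i - 2)
      have h1 := ih (i - 1)
      have h3 := ih (i + 1)
      rw [show i - 2 - (d₀:ℤ) = i - 2 - d₀ by ring] at h2
      rw [e1] at h1
      rw [e3] at h3
      rw [e2]
      have hcpos := hc0.le
      nlinarith [mul_le_mul_of_nonneg_left h2 hppp, mul_le_mul_of_nonneg_left h1 hpp,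
        mul_le_mul_of_nonneg_left h3 hpm, mul_le_mul_of_nonneg_left key hA0]
end

section
/- Let τ = 1.3 and let ε be a real number with ε ≥ √(8·ln 2). Then the series Σ_{i=0}^{∞} 2ⁱ·e^{−(ε·τⁱ)²/2} converges and satisfies Σ_{i=0}^{∞} 2ⁱ·e^{−(ε·τⁱ)²/2} ≤ 3·e^{−ε²/2}. -/
/-- For τ = 1.3 and ε ≥ √(8·ln 2), the series Σ_{i=0}^∞ 2ⁱ·e^{−(ε·τⁱ)²/2} converges
and is at most 3·e^{−ε²/2}. -/
theorem stmt19 (τ ε : ℝ) (hτ : τ = 1.3) (hε : Real.sqrt (8 * Real.log 2) ≤ ε) :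
    Summable (fun i : ℕ => (2 : ℝ) ^ i * Real.exp (-(ε * τ ^ i) ^ 2 / 2)) ∧
    ∑' i : ℕ, (2 : ℝ) ^ i * Real.exp (-(ε * τ ^ i) ^ 2 / 2)
      ≤ 3 * Real.exp (-ε ^ 2 / 2) := by
  subst hτ
  have hlog2 : 0 ≤ Real.log 2 := Real.log_nonneg (by norm_num)
  have hε0 : 0 ≤ ε := le_trans (Real.sqrt_nonneg _) hε
  have hε2 : 8 * Real.log 2 ≤ ε ^ 2 := by
    have h := Real.sq_sqrt (by positivity : (0:ℝ) ≤ 8 * Real.log 2)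
    nlinarith [Real.sqrt_nonneg (8 * Real.log 2)]
  have key : ∀ i : ℕ, (2 : ℝ) ^ i * Real.exp (-(ε * (1.3:ℝ) ^ i) ^ 2 / 2)
      ≤ Real.exp (-ε ^ 2 / 2) * (1/2 : ℝ) ^ i := by
    intro i
    have ht : 1 + (i:ℝ) * (69/100) ≤ (169/100 : ℝ)^i := by
      have := one_add_mul_le_pow (a := (69/100:ℝ)) (by norm_num) i
      linarith
    have hτ2 : (((1.3:ℝ)^i))^2 = (169/100 : ℝ)^i := by
      rw [← pow_mul, mul_comm, pow_mul]; norm_num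
    have h2 : (2:ℝ)^i = Real.exp ((i:ℝ) * Real.log 2) := by
      rw [Real.exp_nat_mul, Real.exp_log two_pos]
    have hhalf : (1/2:ℝ)^i = Real.exp ((i:ℝ) * (-Real.log 2)) := by
      rw [Real.exp_nat_mul]
      congr 1
      rw [← Real.log_inv, Real.exp_log (by norm_num)]
      norm_num
    have hsq : (ε * (1.3:ℝ)^i)^2 = ε^2 * (169/100 : ℝ)^i := by
      rw [mul_pow, hτ2]
    rw [h2, hhalf, ← Real.exp_add, ← Real.exp_add, Real.exp_le_exp, hsq]
    nlinarith [mul_le_mul_of_nonneg_left ht (sq_nonneg ε),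
      mul_le_mul_of_nonneg_left hε2 (Nat.cast_nonneg i : (0:ℝ) ≤ i),
      (Nat.cast_nonneg i : (0:ℝ) ≤ i), hlog2]
  have hg : Summable (fun i : ℕ => Real.exp (-ε ^ 2 / 2) * (1/2 : ℝ) ^ i) :=
    (summable_geometric_of_lt_one (r := (1/2:ℝ)) (by norm_num) (by norm_num)).mul_left _
  have hnn : ∀ i : ℕ, 0 ≤ (2 : ℝ) ^ i * Real.exp (-(ε * (1.3:ℝ) ^ i) ^ 2 / 2) := by
    intro i; positivity
  have hs : Summable (fun i : ℕ => (2 : ℝ) ^ i * Real.exp (-(ε * (1.3:ℝ) ^ i) ^ 2 / 2)) :=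
    Summable.of_nonneg_of_le hnn key hg
  refine ⟨hs, ?_⟩
  calc ∑' i : ℕ, (2 : ℝ) ^ i * Real.exp (-(ε * (1.3:ℝ) ^ i) ^ 2 / 2)
      ≤ ∑' i : ℕ, Real.exp (-ε ^ 2 / 2) * (1/2 : ℝ) ^ i := Summable.tsum_le_tsum key hs hg
    _ = Real.exp (-ε ^ 2 / 2) * (1 - 1/2)⁻¹ := by
        rw [tsum_mul_left, tsum_geometric_of_lt_one (by norm_num) (by norm_num)]
    _ ≤ 3 * Real.exp (-ε ^ 2 / 2) := by
        nlinarith [Real.exp_pos (-ε ^ 2 / 2)]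
end
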